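/- Let (X,d) be a compact metric space and f : X → X a topologically transitive expansive homeomorphism. Then the following are equivalent: (1) f has the shadowing property; (2) f has the limit shadowing property; (3) f has the two-sided limit shadowing property with a gap. -/

import Mathlib

open Filter Topology

variable {X : Type*} [MetricSpace X]

/-- `f` is expansive, with some expansivity constant `ε > 0`. -/
def Expansive (f : X ≃ X) : Prop :=
  ∃ ε : ℝ, 0 < ε ∧ ∀ x y : X, (∀ n : ℤ, dist ((f ^ n) x) ((f ^ n) y) ≤ ε) → x = y

/-- `g` is topologically transitive. -/
def TopologicallyTransitive (g : X → X) : Prop :=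
  ∀ U V : Set X, IsOpen U → IsOpen V → U.Nonempty → V.Nonempty →
    ∃ N : ℕ, 0 < N ∧ (g^[N] '' U ∩ V).Nonempty

/-- The (two-sided) shadowing property for a bijection `f`. -/
def ShadowingPropertyZ (f : X ≃ X) : Prop :=
  ∀ ε : ℝ, 0 < ε → ∃ δ : ℝ, 0 < δ ∧ ∀ x : ℤ → X,
    (∀ i : ℤ, dist (f (x i)) (x (i + 1)) < δ) →
    ∃ y : X, ∀ i : ℤ, dist ((f ^ i) y) (x i) < ε

/-- The limit shadowing property for a map `g`. -/
def LimitShadowing (g : X → X) : Prop :=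
  ∀ x : ℕ → X,
    Tendsto (fun i : ℕ => dist (g (x i)) (x (i + 1))) atTop (𝓝 0) →
    ∃ y : X, Tendsto (fun i : ℕ => dist (g^[i] y) (x i)) atTop (𝓝 0)

/-- A two-sided limit pseudo-orbit: `d(f(x i), x (i+1)) → 0` as `|i| → ∞`. -/
def IsTwoSidedLimitPseudoOrbit (f : X ≃ X) (x : ℤ → X) : Prop :=
  Tendsto (fun i : ℤ => dist (f (x i)) (x (i + 1))) cofinite (𝓝 0)

/-- The sequence `x` is two-sided limit shadowed with gap `K`. -/
def TwoSidedLimitShadowedWithGap (f : X ≃ X) (x : ℤ → X) (K : ℤ) : Prop :=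
  ∃ y : X,
    Tendsto (fun i : ℤ => dist ((f ^ i) y) (x i)) atBot (𝓝 0) ∧
    Tendsto (fun i : ℤ => dist ((f ^ (K + i)) y) (x i)) atTop (𝓝 0)

/-- `f` has the two-sided limit shadowing property with a gap. -/
def TwoSidedLimitShadowingWithGap (f : X ≃ X) : Prop :=
  ∃ N : ℕ, ∀ x : ℤ → X, IsTwoSidedLimitPseudoOrbit f x →
    ∃ K : ℤ, |K| ≤ (N : ℤ) ∧ TwoSidedLimitShadowedWithGap f x K

/-!
Shadowing gives limit shadowing: the tail of a limit pseudo-orbit is shadowed ever more closely,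
and by expansivity any two of these shadows, staying within the expansivity constant of each other,
are asymptotic. For two-sided limit shadowing one shadows the past orbit of a point asymptotic to
the past of the pseudo-orbit, then an orbit segment of uniformly bounded length given by
transitivity and compactness, then the future orbit of a point asymptotic to its future; the length
of the middle segment is the gap. Conversely, a one-sided limit pseudo-orbit continued into the
past by an orbit is a two-sided one. Finally, limit shadowing gives shadowing: by compactness it is
enough to shadow finite pseudo-orbits, and ever finer finite pseudo-orbits that cannot be shadowed,
linked by orbit segments from transitivity, would form a limit pseudo-orbit that is not limit
shadowed.
-/

namespace Homeomorph

variable {Y : Type*} [TopologicalSpace Y]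

def toPermHom : (Y ≃ₜ Y) →* Equiv.Perm Y := MonoidHom.mk' toEquiv fun _ _ => rfl

@[simp]
lemma toEquiv_zpow (f : Y ≃ₜ Y) (n : ℤ) : f.toEquiv ^ n = (f ^ n).toEquiv :=
  (map_zpow toPermHom f n).symm

@[simp]
lemma coe_pow (f : Y ≃ₜ Y) (n : ℕ) : ⇑(f ^ n) = (⇑f)^[n] :=
  congrArg DFunLike.coe (map_pow toPermHom f n)

lemma zpow_add_apply (f : Y ≃ₜ Y) (m n : ℤ) (x : Y) : (f ^ (m + n)) x = (f ^ m) ((f ^ n) x) := by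
  rw [zpow_add, mul_apply]

lemma apply_zpow_apply (f : Y ≃ₜ Y) (n : ℤ) (x : Y) : f ((f ^ n) x) = (f ^ (n + 1)) x := by
  rw [add_comm, zpow_add_apply, zpow_one]

end Homeomorph

open Homeomorph

def IsExpansivityConstant (f : X ≃ₜ X) (c : ℝ) : Prop :=
  ∀ x y : X, (∀ n : ℤ, dist ((f ^ n) x) ((f ^ n) y) ≤ c) → x = y

lemma expansive_iff (f : X ≃ₜ X) :
    Expansive f.toEquiv ↔ ∃ c, 0 < c ∧ IsExpansivityConstant f c := by
  simp only [Expansive, IsExpansivityConstant, toEquiv_zpow, coe_toEquiv]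

lemma IsExpansivityConstant.tendsto_dist_zpow [CompactSpace X] {f : X ≃ₜ X} {c : ℝ}
    (hc : IsExpansivityConstant f c) {l : Filter ℤ} (hl : ∀ m : ℤ, Tendsto (m + ·) l l)
    {x y : X} (h : ∀ᶠ n in l, dist ((f ^ n) x) ((f ^ n) y) ≤ c) :
    Tendsto (fun n => dist ((f ^ n) x) ((f ^ n) y)) l (𝓝 0) := by
  refine tendsto_order.2 ⟨fun a ha => .of_forall fun n => ha.trans_le dist_nonneg, fun η hη => ?_⟩
  by_contra hfar
  set far : Set ℤ := {n | η ≤ dist ((f ^ n) x) ((f ^ n) y)}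
  have : (l ⊓ 𝓟 far).NeBot := frequently_mem_iff_neBot.1 (by simpa [far] using hfar)
  set orbits : ℤ → X × X := fun n => ((f ^ n) x, (f ^ n) y)
  obtain ⟨⟨p, q⟩, hpq⟩ := exists_clusterPt_of_compactSpace (map orbits (l ⊓ 𝓟 far))
  have hfar_closed : IsClosed {z : X × X | η ≤ dist z.1 z.2} :=
    isClosed_le continuous_const continuous_dist
  have hfar_pq : η ≤ dist p q :=
    hfar_closed.mem_of_mapClusterPt hpq (mem_inf_of_right (mem_principal_self far))
  have hclose_pq : ∀ m : ℤ, dist ((f ^ m) p) ((f ^ m) q) ≤ c := fun m => by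
    have hclosed : IsClosed {z : X × X | dist ((f ^ m) z.1) ((f ^ m) z.2) ≤ c} :=
      isClosed_le (((f ^ m).continuous.comp continuous_fst).dist
        ((f ^ m).continuous.comp continuous_snd)) continuous_const
    refine hclosed.mem_of_mapClusterPt hpq ?_
    refine (((hl m).eventually h).mono fun n hn => ?_).filter_mono inf_le_left
    simpa [orbits, zpow_add_apply] using hn
  rw [hc p q hclose_pq, dist_self] at hfar_pq
  exact hη.not_ge hfar_pq

lemma shadowingPropertyZ_iff (f : X ≃ₜ X) :
    ShadowingPropertyZ f.toEquiv ↔ ∀ ε : ℝ, 0 < ε → ∃ δ : ℝ, 0 < δ ∧ ∀ x : ℤ → X,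
      (∀ i : ℤ, dist (f (x i)) (x (i + 1)) < δ) → ∃ y : X, ∀ i : ℤ, dist ((f ^ i) y) (x i) < ε := by
  simp only [ShadowingPropertyZ, toEquiv_zpow, coe_toEquiv]

/-- For `r` a retraction of `ℤ` onto a half-line: `w` on the half-line, continued by an orbit
beyond it. -/
def orbitExtension (f : X ≃ₜ X) (r : ℤ → ℤ) (w : ℤ → X) (j : ℤ) : X :=
  (f ^ (j - r j)) (w (r j))

section orbitExtension

variable {f : X ≃ₜ X} {r : ℤ → ℤ} {w : ℤ → X} {j : ℤ}

lemma orbitExtension_of_eq (h : r j = j) : orbitExtension f r w j = w j := by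
  simp [orbitExtension, h]

lemma apply_orbitExtension_of_eq (h : r (j + 1) = r j) :
    f (orbitExtension f r w j) = orbitExtension f r w (j + 1) := by
  rw [orbitExtension, orbitExtension, apply_zpow_apply, h, sub_add_eq_add_sub]

end orbitExtension

section TailShadowing

variable {f : X ≃ₜ X} {w : ℤ → X}

lemma ShadowingPropertyZ.exists_eventually_dist_lt_atTop (hA : ShadowingPropertyZ f.toEquiv)
    (hw : Tendsto (fun j => dist (f (w j)) (w (j + 1))) atTop (𝓝 0)) {ε : ℝ} (hε : 0 < ε) :
    ∃ z, ∀ᶠ j in atTop, dist ((f ^ j) z) (w j) < ε := by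
  obtain ⟨δ, hδ, hshadow⟩ := (shadowingPropertyZ_iff f).1 hA ε hε
  obtain ⟨N, hN⟩ := eventually_atTop.1 ((tendsto_order.1 hw).2 δ hδ)
  have hext : ∀ j, N ≤ j → orbitExtension f (max · N) w j = w j := fun j hj =>
    orbitExtension_of_eq (max_eq_left hj)
  obtain ⟨z, hz⟩ := hshadow (orbitExtension f (max · N) w) fun j => by
    rcases le_or_gt N j with hj | hj
    · rw [hext j hj, hext (j + 1) (by omega)]
      exact hN j hj
    · rw [apply_orbitExtension_of_eq (by omega), dist_self]
      exact hδ
  exact ⟨z, eventually_atTop.2 ⟨N, fun j hj => hext j hj ▸ hz j⟩⟩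

lemma ShadowingPropertyZ.exists_eventually_dist_lt_atBot (hA : ShadowingPropertyZ f.toEquiv)
    (hw : Tendsto (fun j => dist (f (w j)) (w (j + 1))) atBot (𝓝 0)) {ε : ℝ} (hε : 0 < ε) :
    ∃ z, ∀ᶠ j in atBot, dist ((f ^ j) z) (w j) < ε := by
  obtain ⟨δ, hδ, hshadow⟩ := (shadowingPropertyZ_iff f).1 hA ε hε
  obtain ⟨N, hN⟩ := eventually_atBot.1 ((tendsto_order.1 hw).2 δ hδ)
  have hext : ∀ j, j ≤ N → orbitExtension f (min · N) w j = w j := fun j hj =>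
    orbitExtension_of_eq (min_eq_left hj)
  obtain ⟨z, hz⟩ := hshadow (orbitExtension f (min · N) w) fun j => by
    rcases lt_or_ge j N with hj | hj
    · rw [hext j hj.le, hext (j + 1) (by omega)]
      exact hN j hj.le
    · rw [apply_orbitExtension_of_eq (by omega), dist_self]
      exact hδ
  exact ⟨z, eventually_atBot.2 ⟨N, fun j hj => hext j hj ▸ hz j⟩⟩

end TailShadowing

lemma IsExpansivityConstant.exists_tendsto_dist [CompactSpace X] {f : X ≃ₜ X} {c : ℝ}
    (hc : IsExpansivityConstant f c) (hc0 : 0 < c) {l : Filter ℤ}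
    (hl : ∀ m : ℤ, Tendsto (m + ·) l l) {w : ℤ → X}
    (hw : ∀ ε > 0, ∃ z, ∀ᶠ j in l, dist ((f ^ j) z) (w j) < ε) :
    ∃ z, Tendsto (fun j => dist ((f ^ j) z) (w j)) l (𝓝 0) := by
  obtain ⟨z, hz⟩ := hw (c / 2) (half_pos hc0)
  refine ⟨z, tendsto_order.2 ⟨fun a ha => .of_forall fun j => ha.trans_le dist_nonneg,
    fun η hη => ?_⟩⟩
  obtain ⟨z', hz'⟩ := hw (min (η / 2) (c / 2)) (by positivity)
  have hasymp := hc.tendsto_dist_zpow hl (x := z) (y := z') <| (hz.and hz').mono fun j hj =>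
    calc dist ((f ^ j) z) ((f ^ j) z') ≤ dist ((f ^ j) z) (w j) + dist ((f ^ j) z') (w j) :=
          dist_triangle_right _ _ _
      _ ≤ c / 2 + c / 2 := add_le_add hj.1.le (hj.2.le.trans (min_le_right _ _))
      _ = c := add_halves c
  filter_upwards [(tendsto_order.1 hasymp).2 (η / 2) (half_pos hη), hz'] with j h1 h2
  calc dist ((f ^ j) z) (w j) ≤ dist ((f ^ j) z) ((f ^ j) z') + dist ((f ^ j) z') (w j) :=
        dist_triangle _ _ _
    _ < η / 2 + η / 2 := add_lt_add h1 (h2.trans_le (min_le_left _ _))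
    _ = η := add_halves η

section LimitShadowingOfShadowing

variable [CompactSpace X] {f : X ≃ₜ X} {c : ℝ} {w : ℤ → X}

lemma ShadowingPropertyZ.exists_tendsto_dist_atTop (hA : ShadowingPropertyZ f.toEquiv)
    (hc : IsExpansivityConstant f c) (hc0 : 0 < c)
    (hw : Tendsto (fun j => dist (f (w j)) (w (j + 1))) atTop (𝓝 0)) :
    ∃ z, Tendsto (fun j => dist ((f ^ j) z) (w j)) atTop (𝓝 0) :=
  hc.exists_tendsto_dist hc0 (fun m => tendsto_atTop_add_const_left _ m tendsto_id)
    fun _ hε => hA.exists_eventually_dist_lt_atTop hw hε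

lemma ShadowingPropertyZ.exists_tendsto_dist_atBot (hA : ShadowingPropertyZ f.toEquiv)
    (hc : IsExpansivityConstant f c) (hc0 : 0 < c)
    (hw : Tendsto (fun j => dist (f (w j)) (w (j + 1))) atBot (𝓝 0)) :
    ∃ z, Tendsto (fun j => dist ((f ^ j) z) (w j)) atBot (𝓝 0) :=
  hc.exists_tendsto_dist hc0 (fun m => tendsto_atBot_add_const_left _ m tendsto_id)
    fun _ hε => hA.exists_eventually_dist_lt_atBot hw hε

end LimitShadowingOfShadowing

lemma tendsto_dist_zero_trans {ι : Type*} {l : Filter ι} {a b c : ι → X}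
    (hab : Tendsto (fun i => dist (a i) (b i)) l (𝓝 0))
    (hbc : Tendsto (fun i => dist (b i) (c i)) l (𝓝 0)) :
    Tendsto (fun i => dist (a i) (c i)) l (𝓝 0) :=
  squeeze_zero (fun _ => dist_nonneg) (fun _ => dist_triangle _ _ _) (by simpa using hab.add hbc)

lemma limitShadowing_of_forall_exists_tendsto (f : X ≃ₜ X)
    (h : ∀ w : ℤ → X, Tendsto (fun j => dist (f (w j)) (w (j + 1))) atTop (𝓝 0) →
      ∃ z, Tendsto (fun j => dist ((f ^ j) z) (w j)) atTop (𝓝 0)) :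
    LimitShadowing ⇑f := by
  intro x hx
  have htoNat : Tendsto Int.toNat atTop atTop :=
    tendsto_atTop_atTop.2 fun n => ⟨n, fun j hj => by omega⟩
  obtain ⟨z, hz⟩ := h (fun j => x j.toNat) <| (hx.comp htoNat).congr' <|
    eventually_atTop.2 ⟨0, fun j hj => by simp [show (j + 1).toNat = j.toNat + 1 by omega]⟩
  exact ⟨z, (hz.comp tendsto_natCast_atTop_atTop).congr fun n => by simp⟩

theorem limitShadowing_of_shadowing [CompactSpace X] {f : X ≃ₜ X} (he : Expansive f.toEquiv)
    (hA : ShadowingPropertyZ f.toEquiv) : LimitShadowing ⇑f := by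
  obtain ⟨c, hc0, hc⟩ := (expansive_iff f).1 he
  exact limitShadowing_of_forall_exists_tendsto f fun _ hw => hA.exists_tendsto_dist_atTop hc hc0 hw

theorem limitShadowing_of_twoSidedLimitShadowingWithGap (f : X ≃ₜ X)
    (hC : TwoSidedLimitShadowingWithGap f.toEquiv) : LimitShadowing ⇑f := by
  obtain ⟨N, hN⟩ := hC
  refine limitShadowing_of_forall_exists_tendsto f fun w hw => ?_
  set v := orbitExtension f (max · 0) w
  have hv : ∀ j, 0 ≤ j → v j = w j := fun j hj => orbitExtension_of_eq (max_eq_left hj)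
  have hv_orbit : ∀ j < 0, f (v j) = v (j + 1) := fun j hj =>
    apply_orbitExtension_of_eq (by omega)
  have hpseudo : IsTwoSidedLimitPseudoOrbit f.toEquiv v := by
    rw [IsTwoSidedLimitPseudoOrbit, Int.cofinite_eq, tendsto_sup]
    refine ⟨tendsto_const_nhds.congr' (eventually_atBot.2 ⟨-1, fun j hj => ?_⟩),
      hw.congr' (eventually_atTop.2 ⟨0, fun j hj => ?_⟩)⟩
    · dsimp only
      rw [coe_toEquiv, hv_orbit j (by omega), dist_self]
    · dsimp only
      rw [coe_toEquiv, hv j hj, hv (j + 1) (by omega)]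
  obtain ⟨K, -, y, -, hy⟩ := hN v hpseudo
  refine ⟨(f ^ K) y, hy.congr' (eventually_atTop.2 ⟨0, fun j hj => ?_⟩)⟩
  rw [hv j hj, toEquiv_zpow, coe_toEquiv, add_comm, zpow_add_apply]

lemma TopologicallyTransitive.exists_uniform_bound [CompactSpace X] {g : X → X}
    (hg : Continuous g) (ht : TopologicallyTransitive g) {δ : ℝ} (hδ : 0 < δ) :
    ∃ N : ℕ, ∀ a b : X, ∃ u : X, ∃ n : ℕ, 0 < n ∧ n ≤ N ∧
      dist (g a) u < δ ∧ dist (g^[n] u) b < δ := by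
  set O : X × ℕ → Set (X × X) := fun un =>
    {ab | dist (g ab.1) un.1 < δ ∧ dist (g^[un.2 + 1] un.1) ab.2 < δ}
  have hO : ∀ un, IsOpen (O un) := fun un =>
    (isOpen_lt ((hg.comp continuous_fst).dist continuous_const) continuous_const).inter
      (isOpen_lt (continuous_const.dist continuous_snd) continuous_const)
  have hcover : Set.univ ⊆ ⋃ un, O un := by
    rintro ⟨a, b⟩ -
    obtain ⟨n, hn, _, ⟨u, hu, rfl⟩, hv⟩ := ht (Metric.ball (g a) δ) (Metric.ball b δ)
      Metric.isOpen_ball Metric.isOpen_ball ⟨_, Metric.mem_ball_self hδ⟩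
      ⟨_, Metric.mem_ball_self hδ⟩
    refine Set.mem_iUnion.2 ⟨(u, n - 1), dist_comm (g a) u ▸ hu, ?_⟩
    rw [Nat.sub_add_cancel hn]
    exact hv
  obtain ⟨t, ht⟩ := isCompact_univ.elim_finite_subcover O hO hcover
  refine ⟨t.sup Prod.snd + 1, fun a b => ?_⟩
  obtain ⟨un, hun, hab⟩ := Set.mem_iUnion₂.1 (ht (Set.mem_univ (a, b)))
  exact ⟨un.1, un.2 + 1, by omega, by simpa using Finset.le_sup (f := Prod.snd) hun, hab⟩

lemma ShadowingPropertyZ.exists_connecting_orbit [CompactSpace X] {f : X ≃ₜ X}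
    (hA : ShadowingPropertyZ f.toEquiv) (ht : TopologicallyTransitive ⇑f) {ε : ℝ} (hε : 0 < ε) :
    ∃ N : ℕ, ∀ p q : X, ∃ y : X, ∃ K : ℤ, |K| ≤ N ∧
      (∀ j : ℤ, j ≤ 0 → dist ((f ^ j) y) ((f ^ j) p) < ε) ∧
      ∀ j : ℤ, 0 ≤ j → dist ((f ^ j) ((f ^ K) y)) ((f ^ j) q) < ε := by
  obtain ⟨δ, hδ, hshadow⟩ := (shadowingPropertyZ_iff f).1 hA ε hε
  obtain ⟨N, hN⟩ := ht.exists_uniform_bound f.continuous hδ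
  refine ⟨N + 1, fun p q => ?_⟩
  obtain ⟨u, n, hn0, hnN, hpu, huq⟩ := hN p q
  set w : ℤ → X := fun j =>
    if j ≤ 0 then (f ^ j) p else if j ≤ n then (f ^ (j - 1)) u else (f ^ (j - 1 - n)) q
  have horbit : ∀ {a b : ℤ} (z : X), b = a + 1 → dist (f ((f ^ a) z)) ((f ^ b) z) < δ := by
    rintro a b z rfl
    rw [apply_zpow_apply, dist_self]
    exact hδ
  obtain ⟨y, hy⟩ := hshadow w fun j => by
    simp only [w]
    split_ifs <;> first | exact horbit _ (by omega) | omega | skip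
    · obtain rfl : j = 0 := by omega
      simpa using hpu
    · obtain rfl : j = n := by omega
      simpa [apply_zpow_apply] using huq
  refine ⟨y, n + 1, by rw [abs_of_nonneg (by positivity)]; push_cast; omega,
    fun j hj => by simpa [w, hj] using hy j, fun j hj => ?_⟩
  have := hy (j + (n + 1))
  simp only [w, if_neg (show ¬ j + (n + 1) ≤ 0 by omega),
    if_neg (show ¬ j + (n + 1) ≤ n by omega)] at this
  rwa [zpow_add_apply, show j + (n + 1) - 1 - n = j by ring] at this

theorem twoSidedLimitShadowingWithGap_of_shadowing [CompactSpace X] {f : X ≃ₜ X}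
    (ht : TopologicallyTransitive ⇑f) (he : Expansive f.toEquiv)
    (hA : ShadowingPropertyZ f.toEquiv) : TwoSidedLimitShadowingWithGap f.toEquiv := by
  obtain ⟨c, hc0, hc⟩ := (expansive_iff f).1 he
  obtain ⟨N, hN⟩ := hA.exists_connecting_orbit ht hc0
  refine ⟨N, fun x hx => ?_⟩
  rw [IsTwoSidedLimitPseudoOrbit, Int.cofinite_eq, tendsto_sup] at hx
  obtain ⟨p, hp⟩ := hA.exists_tendsto_dist_atBot hc hc0 hx.1
  obtain ⟨q, hq⟩ := hA.exists_tendsto_dist_atTop hc hc0 hx.2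
  obtain ⟨y, K, hK, hpast, hfuture⟩ := hN p q
  have hyp := hc.tendsto_dist_zpow (fun m => tendsto_atBot_add_const_left _ m tendsto_id)
    (eventually_atBot.2 ⟨0, fun j hj => (hpast j hj).le⟩)
  have hyq := hc.tendsto_dist_zpow (fun m => tendsto_atTop_add_const_left _ m tendsto_id)
    (eventually_atTop.2 ⟨0, fun j hj => (hfuture j hj).le⟩)
  refine ⟨K, hK, y, ?_, ?_⟩
  · simpa using tendsto_dist_zero_trans hyp hp
  · simpa [add_comm K, zpow_add_apply] using tendsto_dist_zero_trans hyq hq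

def FiniteShadowing (g : X → X) : Prop :=
  ∀ ε > 0, ∃ δ > 0, ∀ (x : ℕ → X) (L : ℕ), (∀ i < L, dist (g (x i)) (x (i + 1)) < δ) →
    ∃ z, ∀ i ≤ L, dist (g^[i] z) (x i) < ε

theorem shadowingPropertyZ_of_finiteShadowing [CompactSpace X] {f : X ≃ₜ X}
    (h : FiniteShadowing ⇑f) : ShadowingPropertyZ f.toEquiv := by
  refine (shadowingPropertyZ_iff f).2 fun ε hε => ?_
  obtain ⟨δ, hδ, hshadow⟩ := h (ε / 2) (half_pos hε)
  refine ⟨δ, hδ, fun x hx => ?_⟩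
  have hsegment : ∀ n : ℕ, ∃ z, ∀ i ≤ 2 * n, dist (f^[i] z) (x (i - n)) < ε / 2 := fun n =>
    hshadow (fun i => x (i - n)) (2 * n) fun i _ => by
      simpa [sub_add_eq_add_sub] using hx (i - n)
  choose z hz using hsegment
  obtain ⟨y, hy⟩ :=
    exists_clusterPt_of_compactSpace (map (fun n : ℕ => (f ^ (n : ℤ)) (z n)) atTop)
  refine ⟨y, fun i => lt_of_le_of_lt ?_ (half_lt_self hε)⟩
  have hclosed : IsClosed {v | dist ((f ^ i) v) (x i) ≤ ε / 2} :=
    isClosed_le ((f ^ i).continuous.dist continuous_const) continuous_const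
  refine hclosed.mem_of_mapClusterPt hy (eventually_atTop.2 ⟨i.natAbs, fun n hn => ?_⟩)
  have hin : ((i + n).toNat : ℤ) = i + n := Int.toNat_of_nonneg (by omega)
  have hshift : (f ^ i) ((f ^ (n : ℤ)) (z n)) = f^[(i + n).toNat] (z n) := by
    rw [← coe_pow, ← zpow_natCast, hin, zpow_add_apply]
  have := hz n (i + n).toNat (by omega)
  rw [hin, add_sub_cancel_right] at this
  exact (hshift ▸ this).le

/-- Walking through consecutive blocks of lengths `ℓ k`, a position being (block, offset). -/
def nextPos (ℓ : ℕ → ℕ) (p : ℕ × ℕ) : ℕ × ℕ :=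
  if p.2 + 1 < ℓ p.1 then (p.1, p.2 + 1) else (p.1 + 1, 0)

def blockPos (ℓ : ℕ → ℕ) (n : ℕ) : ℕ × ℕ :=
  (nextPos ℓ)^[n] (0, 0)

section Blocks

variable {ℓ : ℕ → ℕ}

lemma blockPos_succ (n : ℕ) : blockPos ℓ (n + 1) = nextPos ℓ (blockPos ℓ n) :=
  Function.iterate_succ_apply' _ _ _

lemma blockPos_snd_lt (hℓ : ∀ k, 0 < ℓ k) (n : ℕ) : (blockPos ℓ n).2 < ℓ (blockPos ℓ n).1 := by
  induction n with
  | zero => exact hℓ 0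
  | succ n ih =>
    rw [blockPos_succ, nextPos]
    split_ifs with h
    exacts [h, hℓ _]

lemma monotone_blockPos_fst : Monotone fun n => (blockPos ℓ n).1 :=
  monotone_nat_of_le_succ fun n => by
    rw [blockPos_succ, nextPos]
    split_ifs <;> simp

lemma blockPos_add {n k i : ℕ} (h : blockPos ℓ n = (k, 0)) (hi : i < ℓ k) :
    blockPos ℓ (n + i) = (k, i) := by
  induction i with
  | zero => exact h
  | succ i ih => rw [← add_assoc, blockPos_succ, ih (by omega), nextPos, if_pos hi]

lemma exists_blockPos_eq (hℓ : ∀ k, 0 < ℓ k) (k : ℕ) : ∃ n, k ≤ n ∧ blockPos ℓ n = (k, 0) := by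
  induction k with
  | zero => exact ⟨0, le_rfl, rfl⟩
  | succ k ih =>
    obtain ⟨n, hkn, hn⟩ := ih
    have := hℓ k
    refine ⟨n + (ℓ k - 1) + 1, by omega, ?_⟩
    rw [blockPos_succ, blockPos_add hn (by omega), nextPos, if_neg (by dsimp only; omega)]

lemma tendsto_blockPos_fst (hℓ : ∀ k, 0 < ℓ k) :
    Tendsto (fun n => (blockPos ℓ n).1) atTop atTop :=
  tendsto_atTop_atTop_of_monotone monotone_blockPos_fst fun k =>
    let ⟨n, _, hn⟩ := exists_blockPos_eq hℓ k
    ⟨n, by simp [hn]⟩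

lemma tendsto_dist_blockPos (hℓ : ∀ k, 0 < ℓ k) {g : X → X} {s : ℕ × ℕ → X} {δ : ℕ → ℝ}
    (hδ : Tendsto δ atTop (𝓝 0))
    (hs : ∀ p : ℕ × ℕ, p.2 < ℓ p.1 → dist (g (s p)) (s (nextPos ℓ p)) ≤ δ p.1) :
    Tendsto (fun n => dist (g (s (blockPos ℓ n))) (s (blockPos ℓ (n + 1)))) atTop (𝓝 0) :=
  squeeze_zero (fun _ => dist_nonneg)
    (fun n => blockPos_succ n ▸ hs _ (blockPos_snd_lt hℓ n)) (hδ.comp (tendsto_blockPos_fst hℓ))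

end Blocks

def linkedBlocks (g : X → X) (b : ℕ → ℕ → X) (L : ℕ → ℕ) (u : ℕ → X) (p : ℕ × ℕ) : X :=
  if p.2 ≤ L p.1 then b p.1 p.2 else g^[p.2 - L p.1 - 1] (u p.1)

lemma dist_linkedBlocks_nextPos_le {g : X → X} {b : ℕ → ℕ → X} {L n : ℕ → ℕ} {u : ℕ → X}
    {δ : ℕ → ℝ} (hn : ∀ k, 0 < n k) (hδ : ∀ k, 0 ≤ δ k)
    (hb : ∀ k, ∀ i < L k, dist (g (b k i)) (b k (i + 1)) ≤ δ k)
    (hu : ∀ k, dist (g (b k (L k))) (u k) ≤ δ k)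
    (hun : ∀ k, dist (g^[n k] (u k)) (b (k + 1) 0) ≤ δ k) {k i : ℕ} (hi : i < L k + 1 + n k) :
    dist (g (linkedBlocks g b L u (k, i)))
      (linkedBlocks g b L u (nextPos (fun k => L k + 1 + n k) (k, i))) ≤ δ k := by
  have hs_b : ∀ k i, i ≤ L k → linkedBlocks g b L u (k, i) = b k i := fun _ _ hi => if_pos hi
  have hs_u : ∀ k i, L k < i → linkedBlocks g b L u (k, i) = g^[i - L k - 1] (u k) :=
    fun _ _ hi => if_neg hi.not_ge
  have := hn k
  rw [nextPos]
  dsimp only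
  split_ifs with hnext
  · rcases lt_or_ge i (L k) with h | h
    · rw [hs_b k i h.le, hs_b k (i + 1) h]
      exact hb k i h
    rw [hs_u k (i + 1) (by omega)]
    rcases h.eq_or_lt with rfl | h
    · simpa [hs_b _ _ le_rfl] using hu k
    · rw [hs_u k i h, ← Function.iterate_succ_apply' g,
        show (i - L k - 1).succ = i + 1 - L k - 1 by omega, dist_self]
      exact hδ k
  · rw [hs_u k i (by omega), hs_b (k + 1) 0 (Nat.zero_le _), ← Function.iterate_succ_apply' g,
      show (i - L k - 1).succ = n k by omega]
    exact hun k

theorem finiteShadowing_of_limitShadowing [CompactSpace X] {g : X → X} (hg : Continuous g)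
    (ht : TopologicallyTransitive g) (hB : LimitShadowing g) : FiniteShadowing g := by
  by_contra hfin
  simp only [FiniteShadowing] at hfin
  push Not at hfin
  obtain ⟨ε, hε, hbad⟩ := hfin
  set δ : ℕ → ℝ := fun k => 1 / (k + 1)
  have hδ : ∀ k, 0 < δ k := fun k => Nat.one_div_pos_of_nat
  choose b L hb hb_bad using fun k => hbad (δ k) (hδ k)
  have hlink : ∀ k, ∃ u n, 0 < n ∧ dist (g (b k (L k))) u < δ k ∧
      dist (g^[n] u) (b (k + 1) 0) < δ k := fun k => by
    obtain ⟨N, hN⟩ := ht.exists_uniform_bound hg (hδ k)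
    obtain ⟨u, n, hn, -, hu⟩ := hN (b k (L k)) (b (k + 1) 0)
    exact ⟨u, n, hn, hu⟩
  choose u n hn hu hun using hlink
  set ℓ : ℕ → ℕ := fun k => L k + 1 + n k
  have hℓ : ∀ k, 0 < ℓ k := fun _ => by positivity
  obtain ⟨y, hy⟩ := hB (fun m => linkedBlocks g b L u (blockPos ℓ m)) <|
    tendsto_dist_blockPos hℓ tendsto_one_div_add_atTop_nhds_zero_nat fun p hp =>
      dist_linkedBlocks_nextPos_le hn (fun k => (hδ k).le) (fun k i hi => (hb k i hi).le)
        (fun k => (hu k).le) (fun k => (hun k).le) hp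
  obtain ⟨M, hM⟩ := eventually_atTop.1 ((tendsto_order.1 hy).2 ε hε)
  obtain ⟨m, hMm, hm⟩ := exists_blockPos_eq hℓ M
  obtain ⟨i, hi, hfar⟩ := hb_bad M (g^[m] y)
  have := hM (m + i) (by omega)
  rw [blockPos_add hm (show i < L M + 1 + n M by omega), add_comm,
    Function.iterate_add_apply] at this
  exact hfar.not_gt ((if_pos hi : linkedBlocks g b L u (M, i) = b M i) ▸ this)

/-- For a topologically transitive expansive homeomorphism of a compact metric space,
shadowing, limit shadowing and two-sided limit shadowing with a gap are equivalent. -/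
theorem stmt12 [CompactSpace X] (f : X ≃ₜ X)
    (ht : TopologicallyTransitive ⇑f) (he : Expansive f.toEquiv) :
    (ShadowingPropertyZ f.toEquiv ↔ LimitShadowing ⇑f) ∧
    (LimitShadowing ⇑f ↔ TwoSidedLimitShadowingWithGap f.toEquiv) := by
  have hBA : LimitShadowing ⇑f → ShadowingPropertyZ f.toEquiv := fun hB =>
    shadowingPropertyZ_of_finiteShadowing (finiteShadowing_of_limitShadowing f.continuous ht hB)
  exact ⟨⟨limitShadowing_of_shadowing he, hBA⟩,
    fun hB => twoSidedLimitShadowingWithGap_of_shadowing ht he (hBA hB),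
    limitShadowing_of_twoSidedLimitShadowingWithGap f⟩
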